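/- Fix real numbers a > 1, q, α, β, γ with γ < 1 and 2−γ not a nonpositive integer, set ε = 0, τ = 1−γ and δ = α+β+τ. Let I ⊆ (0,1) be an open interval and let y : ℝ → ℝ be twice differentiable on I solving the Heun equation y'' + Py' + Qy = 0 (with these parameters) on I. Then for every x ∈ I the function x ↦ (1−x)^δ · ( τ[₂F₁(δ,τ;1+τ;x) + (δx/(1+τ))·₂F₁(δ+1,1+τ;2+τ;x)]·y(x) − x·₂F₁(δ,τ;1+τ;x)·y'(x) ) has derivative at x equal to ((1−x)^(δ−1)(αβx−q)/(a−x))·₂F₁(δ,τ;1+τ;x)·y(x). (This is the Lagrangian identity with auxiliary function h(x) = x^(1−γ)·₂F₁(δ,1−γ;2−γ;x), a solution of h'' + Ph' = 0.) -/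

import Mathlib

/-!
Put `w = x^γ (1-x)^δ`, so that `w' = P w` when `ε = 0`, and `h = x^τ F` with
`F = ₂F₁(δ, τ; 1+τ; x)`. Gauss's contiguous relation in `b` and the binomial series
`₂F₁(δ, 1+τ; 1+τ; x) = (1-x)^(-δ)` give the first integral
`w h' = (1-x)^δ (τ F + x F') = τ` of `h'' + P h' = 0`; this collapses the bracket to
`τ y - w h y'` with `w h = x (1-x)^δ F`. Differentiating and using the Heun equation
leaves `-w h (y'' + P y') = w h Q y`.
-/

theorem ascPochhammer_succ_eval_left {S : Type*} [CommSemiring S] (n : ℕ) (k : S) :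
    (ascPochhammer S (n + 1)).eval k = k * (ascPochhammer S n).eval (k + 1) := by
  simp [ascPochhammer_succ_left]

section Coefficients

variable {𝕂 : Type*} [Field 𝕂] (a b c : 𝕂) (n : ℕ)

theorem add_mul_ordinaryHypergeometricCoefficient :
    (b + n) * ordinaryHypergeometricCoefficient a b c n =
      b * ordinaryHypergeometricCoefficient a (b + 1) c n := by
  have h := ascPochhammer_succ_eval n b
  rw [ascPochhammer_succ_eval_left] at h
  simp only [ordinaryHypergeometricCoefficient]
  linear_combination -((n.factorial : 𝕂)⁻¹ * (ascPochhammer 𝕂 n).eval a *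
    ((ascPochhammer 𝕂 n).eval c)⁻¹) * h

theorem succ_mul_ordinaryHypergeometricCoefficient_succ [CharZero 𝕂] :
    ((n : 𝕂) + 1) * ordinaryHypergeometricCoefficient a b c (n + 1) =
      a * b / c * ordinaryHypergeometricCoefficient (a + 1) (b + 1) (c + 1) n := by
  simp only [ordinaryHypergeometricCoefficient, ascPochhammer_succ_eval_left,
    Nat.factorial_succ, Nat.cast_mul, Nat.cast_succ, mul_inv]
  have : (n : 𝕂) + 1 ≠ 0 := n.cast_add_one_ne_zero
  field_simp

end Coefficients

section Series

variable {𝕂 : Type*} [RCLike 𝕂]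

theorem one_le_ordinaryHypergeometricSeries_radius (𝔸 : Type*) [NormedDivisionRing 𝔸]
    [NormedAlgebra 𝕂 𝔸] (a b c : 𝕂) :
    1 ≤ (ordinaryHypergeometricSeries 𝔸 a b c).radius := by
  by_cases habc : ∀ k : ℕ, (k : 𝕂) ≠ -a ∧ (k : 𝕂) ≠ -b ∧ (k : 𝕂) ≠ -c
  · rw [ordinaryHypergeometricSeries_radius_eq_one 𝔸 a b c habc]
  · obtain ⟨k, hk⟩ := not_forall.1 habc
    have : a = -k ∨ b = -k ∨ c = -k := by grind
    rcases this with rfl | rfl | rfl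
    · simp [ordinaryHypergeometric_radius_top_of_neg_nat₁]
    · simp [ordinaryHypergeometric_radius_top_of_neg_nat₂]
    · simp [ordinaryHypergeometric_radius_top_of_neg_nat₃]

theorem summable_norm_ordinaryHypergeometricCoefficient_mul_pow (a b c : 𝕂) {x : 𝕂}
    (hx : ‖x‖ < 1) :
    Summable fun n => ‖ordinaryHypergeometricCoefficient a b c n * x ^ n‖ := by
  have hmem : x ∈ Metric.eball (0 : 𝕂) (ordinaryHypergeometricSeries 𝕂 a b c).radius := by
    refine mem_eball_zero_iff.2
      (lt_of_lt_of_le ?_ (one_le_ordinaryHypergeometricSeries_radius 𝕂 a b c))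
    simpa [enorm_eq_nnnorm, ← NNReal.coe_lt_coe] using hx
  simpa only [ordinaryHypergeometricSeries_apply_eq, smul_eq_mul] using
    (ordinaryHypergeometricSeries 𝕂 a b c).summable_norm_apply hmem

theorem ordinaryHypergeometric_eq_tsum_mul_pow (a b c x : 𝕂) :
    ₂F₁ a b c x = ∑' n, ordinaryHypergeometricCoefficient a b c n * x ^ n := by
  simp [ordinaryHypergeometric_eq_tsum]

theorem hasDerivAt_tsum_mul_pow {c : ℕ → 𝕂} {r : ℝ} {x : 𝕂} (hx : ‖x‖ < r)
    (hc : Summable fun n : ℕ => ‖((n : 𝕂) + 1) * c (n + 1)‖ * r ^ n) :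
    HasDerivAt (fun t => ∑' n, c n * t ^ n)
      (∑' n : ℕ, ((n : 𝕂) + 1) * c (n + 1) * x ^ n) x := by
  have hu : Summable fun n : ℕ => ‖(n : 𝕂) * c n‖ * r ^ (n - 1) := by
    rw [← summable_nat_add_iff 1]
    simpa using hc
  have hbound (n : ℕ) (t : 𝕂) (ht : ‖t‖ < r) :
      ‖(n : 𝕂) * c n * t ^ (n - 1)‖ ≤ ‖(n : 𝕂) * c n‖ * r ^ (n - 1) := by
    rw [norm_mul, norm_pow]
    gcongr
  have hr : 0 < r := (norm_nonneg x).trans_lt hx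
  have H := hasDerivAt_tsum_of_isPreconnected hu Metric.isOpen_ball
    (convex_ball (0 : 𝕂) r).isPreconnected (g := fun n t => c n * t ^ n)
    (g' := fun (n : ℕ) t => (n : 𝕂) * c n * t ^ (n - 1))
    (fun n t _ => by
      simpa [mul_comm, mul_assoc, mul_left_comm] using (hasDerivAt_pow n t).const_mul (c n))
    (fun n t ht => hbound n t (mem_ball_zero_iff.1 ht))
    (Metric.mem_ball_self hr) (summable_of_ne_finset_zero (s := {0}) (by simp_all))
    (mem_ball_zero_iff.2 hx)
  refine H.congr_deriv ?_
  rw [(Summable.of_norm_bounded hu fun n => hbound n x hx).tsum_eq_zero_add]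
  simp

theorem hasDerivAt_ordinaryHypergeometric (a b c : 𝕂) {x : 𝕂} (hx : ‖x‖ < 1) :
    HasDerivAt (₂F₁ a b c) (a * b / c * ₂F₁ (a + 1) (b + 1) (c + 1) x) x := by
  obtain ⟨r, hxr, hr1⟩ := exists_between hx
  have hr0 : 0 ≤ r := (norm_nonneg x).trans hxr.le
  have hr : ‖(r : 𝕂)‖ < 1 := by rwa [RCLike.norm_ofReal, abs_of_nonneg hr0]
  have hc : Summable fun n : ℕ =>
      ‖((n : 𝕂) + 1) * ordinaryHypergeometricCoefficient a b c (n + 1)‖ * r ^ n := by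
    simp_rw [succ_mul_ordinaryHypergeometricCoefficient_succ]
    refine ((summable_norm_ordinaryHypergeometricCoefficient_mul_pow (a + 1) (b + 1) (c + 1)
      hr).mul_left ‖a * b / c‖).congr fun n => ?_
    simp only [norm_mul, norm_pow, RCLike.norm_ofReal, abs_of_nonneg hr0]
    ring
  have h := hasDerivAt_tsum_mul_pow hxr hc
  rw [funext (ordinaryHypergeometric_eq_tsum_mul_pow a b c),
    ordinaryHypergeometric_eq_tsum_mul_pow, ← tsum_mul_left]
  convert h using 3 with n
  rw [succ_mul_ordinaryHypergeometricCoefficient_succ]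
  ring

/-- Gauss's contiguous relation `(b + x d/dx) ₂F₁(a, b; c; x) = b ₂F₁(a, b + 1; c; x)`. -/
theorem ordinaryHypergeometric_contiguous (a b c : 𝕂) {x : 𝕂} (hx : ‖x‖ < 1) :
    b * ₂F₁ a b c x + x * (a * b / c * ₂F₁ (a + 1) (b + 1) (c + 1) x) =
      b * ₂F₁ a (b + 1) c x := by
  set C := ordinaryHypergeometricCoefficient a b c
  set C' := ordinaryHypergeometricCoefficient (a + 1) (b + 1) (c + 1)
  have hterm (n : ℕ) : x * (a * b / c * (C' n * x ^ n)) =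
      ((n + 1 : ℕ) : 𝕂) * C (n + 1) * x ^ (n + 1) := by
    rw [Nat.cast_succ, succ_mul_ordinaryHypergeometricCoefficient_succ]
    ring
  have hs : Summable fun n => C n * x ^ n :=
    (summable_norm_ordinaryHypergeometricCoefficient_mul_pow a b c hx).of_norm
  have hs' : Summable fun n : ℕ => (n : 𝕂) * C n * x ^ n := by
    refine (summable_nat_add_iff 1).1 ?_
    simp_rw [← hterm]
    exact ((summable_norm_ordinaryHypergeometricCoefficient_mul_pow (a + 1) (b + 1) (c + 1)
      hx).of_norm.mul_left _).mul_left _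
  have hderiv : x * (a * b / c * ₂F₁ (a + 1) (b + 1) (c + 1) x) =
      ∑' n : ℕ, (n : 𝕂) * C n * x ^ n := by
    rw [hs'.tsum_eq_zero_add, ordinaryHypergeometric_eq_tsum_mul_pow, ← tsum_mul_left,
      ← tsum_mul_left, Nat.cast_zero, zero_mul, zero_mul, zero_add]
    exact tsum_congr hterm
  rw [hderiv, ordinaryHypergeometric_eq_tsum_mul_pow, ordinaryHypergeometric_eq_tsum_mul_pow,
    ← tsum_mul_left, ← tsum_mul_left, ← (hs.mul_left b).tsum_add hs']
  refine tsum_congr fun n => ?_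
  linear_combination x ^ n * add_mul_ordinaryHypergeometricCoefficient a b c n

end Series

theorem ordinaryHypergeometric_eq_one_sub_rpow (a b : ℝ) (hb : ∀ n : ℕ, b ≠ -n) {x : ℝ}
    (hx : |x| < 1) : ₂F₁ a b b x = (1 - x) ^ (-a) := by
  have h := Real.one_add_rpow_hasFPowerSeriesOnBall_zero (a := -a) |>.hasSum (y := -x)
    (by simpa [enorm_eq_nnnorm, ← NNReal.coe_lt_coe] using hx)
  rw [binomialSeries_eq_ordinaryHypergeometricSeries (b := b) (fun n h => hb n (by linarith)),
    neg_neg] at h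
  simp only [FormalMultilinearSeries.compContinuousLinearMap_apply] at h
  rw [zero_add, ← sub_eq_add_neg] at h
  rw [← h.tsum_eq, ordinaryHypergeometric, FormalMultilinearSeries.sum]
  simp [Function.comp_def]

theorem one_sub_rpow_mul_ordinaryHypergeometric_contiguous (a b : ℝ)
    (hb : ∀ n : ℕ, 1 + b ≠ -n) {x : ℝ} (hx : |x| < 1) :
    (1 - x) ^ a * (b * ₂F₁ a b (1 + b) x +
      x * (a * b / (1 + b) * ₂F₁ (a + 1) (1 + b) (2 + b) x)) = b := by
  have h := ordinaryHypergeometric_contiguous a b (1 + b) (x := x) (by rwa [Real.norm_eq_abs])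
  rw [show b + 1 = 1 + b by ring, show 1 + b + 1 = 2 + b by ring,
    ordinaryHypergeometric_eq_one_sub_rpow a (1 + b) hb hx] at h
  have hx1 : 0 < 1 - x := by linarith [le_abs_self x]
  rw [h, Real.rpow_neg hx1.le, mul_left_comm, mul_inv_cancel₀ (Real.rpow_pos_of_pos hx1 a).ne',
    mul_one]

theorem hasDerivAt_one_sub_rpow_mul_mul_ordinaryHypergeometric (δ τ : ℝ)
    (hτ : ∀ n : ℕ, 1 + τ ≠ -n) {x : ℝ} (hx : |x| < 1) (hx0 : x ≠ 0) :
    HasDerivAt (fun t => (1 - t) ^ δ * (t * ₂F₁ δ τ (1 + τ) t))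
      (((1 - τ) / x + δ / (x - 1)) * ((1 - x) ^ δ * (x * ₂F₁ δ τ (1 + τ) x)) + τ) x := by
  have hx1 : 0 < 1 - x := by linarith [le_abs_self x]
  have hF := hasDerivAt_ordinaryHypergeometric δ τ (1 + τ) (x := x) (by rwa [Real.norm_eq_abs])
  rw [show τ + 1 = 1 + τ by ring, show 1 + τ + 1 = 2 + τ by ring] at hF
  have hw := ((hasDerivAt_id x).const_sub 1).rpow_const (p := δ) (Or.inl hx1.ne')
  refine (hw.mul ((hasDerivAt_id x).mul hF)).congr_deriv ?_
  have key := one_sub_rpow_mul_ordinaryHypergeometric_contiguous δ τ hτ hx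
  have hx1' : x - 1 ≠ 0 := by linarith
  simp only [id, Pi.mul_apply]
  rw [Real.rpow_sub_one hx1.ne']
  field_simp
  linear_combination (x - 1) * (1 - x) * key

/-- The Lagrange identity `(c y - V y')' = V Q y`, for `c = w h'` and `V = w h` where
`w' = P w` and `h'' + P h' = 0`. -/
theorem hasDerivAt_const_mul_sub_mul_of_ode {c P Q x y'' : ℝ} {V y y' : ℝ → ℝ}
    (hV : HasDerivAt V (P * V x + c) x) (hy : HasDerivAt y (y' x) x) (hy' : HasDerivAt y' y'' x)
    (hode : y'' + P * y' x + Q * y x = 0) :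
    HasDerivAt (fun t => c * y t - V t * y' t) (V x * Q * y x) x := by
  refine ((hy.const_mul c).sub (hV.mul hy')).congr_deriv ?_
  linear_combination -V x * hode

theorem heun_integral_hypergeometric_h_epsilon_zero_general
    (a q α β γ τ δ : ℝ) (ha : 1 < a)
    (hγint : ∀ n : ℕ, 2 - γ ≠ -(n : ℝ))
    (hτ : τ = 1 - γ)
    (I : Set ℝ) (hI : IsOpen I)
    (hIsub : I ⊆ Set.Ioo (0 : ℝ) 1)
    (y y' y'' : ℝ → ℝ)
    (hy : ∀ x ∈ I, HasDerivAt y (y' x) x)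
    (hy' : ∀ x ∈ I, HasDerivAt y' (y'' x) x)
    (hode : ∀ x ∈ I, y'' x
      + (γ / x + δ / (x - 1) + (0 : ℝ) / (x - a)) * y' x
      + ((α * β * x - q) / (x * (x - 1) * (x - a))) * y x = 0) :
    ∀ x ∈ I, HasDerivAt
      (fun t => (1 - t) ^ δ *
        (τ * (₂F₁ δ τ (1 + τ) t
            + δ * t / (1 + τ) * ₂F₁ (δ + 1) (1 + τ) (2 + τ) t) * y t
          - t * ₂F₁ δ τ (1 + τ) t * y' t))
      ((1 - x) ^ (δ - 1) * (α * β * x - q) / (a - x)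
        * ₂F₁ δ τ (1 + τ) x * y x) x := by
  have hτint (n : ℕ) : 1 + τ ≠ -n := by
    rw [hτ, show 1 + (1 - γ) = 2 - γ by ring]
    exact hγint n
  have habs {t : ℝ} (ht : t ∈ I) : |t| < 1 :=
    abs_lt.2 ⟨by linarith [(hIsub ht).1], (hIsub ht).2⟩
  intro x hx
  obtain ⟨hx0, hx1⟩ := hIsub hx
  have hV := hasDerivAt_one_sub_rpow_mul_mul_ordinaryHypergeometric δ τ hτint (habs hx) hx0.ne'
  have hode' : y'' x + ((1 - τ) / x + δ / (x - 1)) * y' x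
      + (α * β * x - q) / (x * (x - 1) * (x - a)) * y x = 0 := by
    simpa [hτ] using hode x hx
  refine ((hasDerivAt_const_mul_sub_mul_of_ode hV (hy x hx) (hy' x hx) hode').congr_of_eventuallyEq
    ?_).congr_deriv ?_
  · filter_upwards [hI.mem_nhds hx] with t ht
    have key := one_sub_rpow_mul_ordinaryHypergeometric_contiguous δ τ hτint (habs ht)
    linear_combination y t * key
  · have hxa : x - a ≠ 0 := by linarith
    have hax : a - x ≠ 0 := by linarith
    have hx1' : x - 1 ≠ 0 := by linarith
    have hx0' : x ≠ 0 := hx0.ne'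
    rw [Real.rpow_sub_one (by linarith)]
    field_simp
    ring

/-- Lagrangian identity for the Heun equation with `ε = 0` and auxiliary function
`h(x) = x^(1-γ) ₂F₁(δ, 1-γ; 2-γ; x)` (a solution of `h'' + P h' = 0`): with
`τ = 1-γ`, `δ = α+β+τ`, for any solution `y` on an open interval `I ⊆ (0,1)` (`a > 1`,
`γ < 1`, `2-γ` not a nonpositive integer), the function
`x ↦ (1-x)^δ (τ[₂F₁(δ,τ;1+τ;x) + (δx/(1+τ))₂F₁(δ+1,1+τ;2+τ;x)] y(x)
  - x ₂F₁(δ,τ;1+τ;x) y'(x))`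
has derivative `((1-x)^(δ-1)(αβx-q)/(a-x)) ₂F₁(δ,τ;1+τ;x) y(x)`. -/
theorem heun_integral_hypergeometric_h_epsilon_zero
    (a q α β γ τ δ : ℝ) (ha : 1 < a) (hγ : γ < 1)
    (hγint : ∀ n : ℕ, 2 - γ ≠ -(n : ℝ))
    (hτ : τ = 1 - γ) (hδ : δ = α + β + τ)
    (I : Set ℝ) (hI : IsOpen I) (hIconn : I.OrdConnected)
    (hIsub : I ⊆ Set.Ioo (0 : ℝ) 1)
    (y y' y'' : ℝ → ℝ)
    (hy : ∀ x ∈ I, HasDerivAt y (y' x) x)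
    (hy' : ∀ x ∈ I, HasDerivAt y' (y'' x) x)
    (hode : ∀ x ∈ I, y'' x
      + (γ / x + δ / (x - 1) + (0 : ℝ) / (x - a)) * y' x
      + ((α * β * x - q) / (x * (x - 1) * (x - a))) * y x = 0) :
    ∀ x ∈ I, HasDerivAt
      (fun t => (1 - t) ^ δ *
        (τ * (₂F₁ δ τ (1 + τ) t
            + δ * t / (1 + τ) * ₂F₁ (δ + 1) (1 + τ) (2 + τ) t) * y t
          - t * ₂F₁ δ τ (1 + τ) t * y' t))
      ((1 - x) ^ (δ - 1) * (α * β * x - q) / (a - x)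
        * ₂F₁ δ τ (1 + τ) x * y x) x :=
  heun_integral_hypergeometric_h_epsilon_zero_general a q α β γ τ δ ha hγint hτ I hI hIsub y y' y''
    hy hy' hode
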